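/- (Two-sided norm estimate for the diagonal sum) There exists a real number α > 0 such that for every real q with |q| ≤ α and all natural numbers k, r, s, one has (1/2)·[r+s]_q! ≤ ∑_{i=0}^{r} q^{(r-i)² + 2k(r-i)}·[r]_q!·[s]_q!·binom(r,i)_q·binom(s,r-i)_q ≤ 2·[r+s]_q!, where terms with r - i > s vanish since the corresponding q-binomial coefficient is 0. (By the inner product formula, this sum equals ‖ξ_{r,s}‖² = ‖e^{⊗r} ⊗ ξ ⊗ e^{⊗s}‖_q² for a degree-k unit vector ξ killed by the left and right annihilation operators of e.) -/

import Mathlib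

/-- The q-integer `[n]_q = (1 - q^n)/(1 - q)`. -/
noncomputable def qInt (q : ℝ) (n : ℕ) : ℝ := (1 - q ^ n) / (1 - q)

/-- The q-factorial `[n]_q! = [1]_q ⋯ [n]_q`, with `[0]_q! = 1`. -/
noncomputable def qFact (q : ℝ) : ℕ → ℝ
  | 0 => 1
  | n + 1 => qFact q n * qInt q (n + 1)

/-- The q-binomial coefficient `binom(n,m)_q`, with value `0` when `m > n`. -/
noncomputable def qBinom (q : ℝ) (n m : ℕ) : ℝ :=
  if m ≤ n then qFact q n / (qFact q m * qFact q (n - m)) else 0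

/-!
Since `[n]_q! = (q; q)_n / (1 - q)^n`, the q-binomial coefficients are quotients of q-Pochhammer
symbols. For `|q| ≤ α < 1/2` with `δ = α / (1 - α)`, every `(q; q)_n` lies in `[1 - δ, (1 - δ)⁻¹]`
(compare with `∏ (1 ± α^j)` and use `1 - ∑ aⱼ ≤ ∏ (1 - aⱼ)`), so all q-binomials lie in
`[(1 - δ)³, (1 - δ)⁻³]`. Hence `[r+s]_q! = binom(r+s, r)_q [r]_q! [s]_q!` is comparable to
`F = [r]_q! [s]_q!`, while the diagonal sum is `F` (the term `i = r`) plus terms carrying a factor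
`q^(r-i)`, whose total is at most `δ (1 - δ)⁻⁶ F`. At `α = 1/20` both constants fit.
-/

open Finset

theorem one_sub_sum_le_prod_one_sub {ι R : Type*} [CommRing R] [LinearOrder R]
    [IsStrictOrderedRing R] (s : Finset ι) {a : ι → R} (h0 : ∀ i ∈ s, 0 ≤ a i)
    (h1 : ∀ i ∈ s, a i ≤ 1) : 1 - ∑ i ∈ s, a i ≤ ∏ i ∈ s, (1 - a i) := by
  classical
  induction s using Finset.induction_on with
  | empty => simp
  | insert j s hj ih =>
    rw [sum_insert hj, prod_insert hj]
    have ha0 := h0 j (mem_insert_self j s)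
    have hprod := ih (fun i hi => h0 i (mem_insert_of_mem hi))
      (fun i hi => h1 i (mem_insert_of_mem hi))
    have hsum : 0 ≤ ∑ i ∈ s, a i := sum_nonneg fun i hi => h0 i (mem_insert_of_mem hi)
    calc 1 - (a j + ∑ i ∈ s, a i) ≤ (1 - a j) * (1 - ∑ i ∈ s, a i) := by nlinarith
      _ ≤ (1 - a j) * ∏ i ∈ s, (1 - a i) :=
        mul_le_mul_of_nonneg_left hprod (sub_nonneg.2 (h1 j (mem_insert_self j s)))

theorem sum_range_pow_succ_le {R : Type*} [Field R] [LinearOrder R] [IsStrictOrderedRing R]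
    {α : R} (hα₀ : 0 ≤ α) (hα₁ : α < 1) (n : ℕ) :
    ∑ j ∈ range n, α ^ (j + 1) ≤ α / (1 - α) := by
  have h := geom_sum_Ico_le_of_lt_one (m := 1) (n := n + 1) hα₀ hα₁
  simp_rw [sum_Ico_eq_sum_range, Nat.add_sub_cancel, pow_one, add_comm 1] at h
  exact h

noncomputable def qPochhammer (q : ℝ) (n : ℕ) : ℝ := ∏ j ∈ range n, (1 - q ^ (j + 1))

section
variable {q : ℝ}

theorem qFact_eq_qPochhammer_div (n : ℕ) :
    qFact q n = qPochhammer q n / (1 - q) ^ n := by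
  induction n with
  | zero => simp [qFact, qPochhammer]
  | succ n ih =>
    rw [qFact, ih, qInt, qPochhammer, qPochhammer, prod_range_succ, div_mul_div_comm, ← pow_succ]

theorem qBinom_eq_qPochhammer (hq : q ≠ 1) {m n : ℕ} (hmn : m ≤ n) :
    qBinom q n m = qPochhammer q n / (qPochhammer q m * qPochhammer q (n - m)) := by
  rw [qBinom, if_pos hmn, qFact_eq_qPochhammer_div, qFact_eq_qPochhammer_div,
    qFact_eq_qPochhammer_div, div_mul_div_comm, ← pow_add, Nat.add_sub_cancel' hmn,
    div_div_div_cancel_right₀ (pow_ne_zero _ (sub_ne_zero.2 hq.symm))]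

theorem qFact_pos (hq : |q| < 1) (n : ℕ) : 0 < qFact q n := by
  induction n with
  | zero => simp [qFact]
  | succ n ih =>
    have hpow : q ^ (n + 1) < 1 :=
      (le_abs_self _).trans_lt (by rw [abs_pow]; exact pow_lt_one₀ (abs_nonneg q) hq n.succ_ne_zero)
    exact mul_pos ih (div_pos (sub_pos.2 hpow) (sub_pos.2 (abs_lt.1 hq).2))

theorem qBinom_self (hq : |q| < 1) (n : ℕ) : qBinom q n n = 1 := by
  rw [qBinom, if_pos le_rfl, Nat.sub_self, qFact, mul_one, div_self (qFact_pos hq n).ne']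

theorem qBinom_zero_right (hq : |q| < 1) (n : ℕ) : qBinom q n 0 = 1 := by
  rw [qBinom, if_pos n.zero_le, Nat.sub_zero, qFact, one_mul, div_self (qFact_pos hq n).ne']

theorem qFact_add_eq_qBinom_mul (hq : |q| < 1) (r s : ℕ) :
    qFact q (r + s) = qBinom q (r + s) r * (qFact q r * qFact q s) := by
  rw [qBinom, if_pos (Nat.le_add_right r s), Nat.add_sub_cancel_left,
    div_mul_cancel₀ _ (mul_pos (qFact_pos hq r) (qFact_pos hq s)).ne']

variable {α : ℝ}

theorem abs_pow_le_pow_of_abs_le (hq : |q| ≤ α) (k : ℕ) : |q ^ k| ≤ α ^ k := by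
  rw [abs_pow]
  exact pow_le_pow_left₀ (abs_nonneg q) hq k

theorem one_sub_le_qPochhammer (hq : |q| ≤ α) (hα : α < 1) (n : ℕ) :
    1 - α / (1 - α) ≤ qPochhammer q n := by
  have hα₀ : 0 ≤ α := (abs_nonneg q).trans hq
  calc 1 - α / (1 - α) ≤ 1 - ∑ j ∈ range n, α ^ (j + 1) :=
        sub_le_sub_left (sum_range_pow_succ_le hα₀ hα n) 1
    _ ≤ ∏ j ∈ range n, (1 - α ^ (j + 1)) :=
        one_sub_sum_le_prod_one_sub _ (fun j _ => pow_nonneg hα₀ _)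
          (fun j _ => pow_le_one₀ hα₀ hα.le)
    _ ≤ qPochhammer q n := by
        refine prod_le_prod (fun j _ => sub_nonneg.2 (pow_le_one₀ hα₀ hα.le)) fun j _ => ?_
        have := (abs_le.1 (abs_pow_le_pow_of_abs_le hq (j + 1))).2
        linarith

theorem one_sub_div_one_sub_pos (hα : α < 1 / 2) : 0 < 1 - α / (1 - α) := by
  rw [sub_pos, div_lt_one (by linarith)]
  linarith

theorem qPochhammer_le_inv (hq : |q| ≤ α) (hα : α < 1 / 2) (n : ℕ) :
    qPochhammer q n ≤ (1 - α / (1 - α))⁻¹ := by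
  have hα₀ : 0 ≤ α := (abs_nonneg q).trans hq
  have hα₁ : α < 1 := by linarith
  have hβ := one_sub_div_one_sub_pos hα
  calc qPochhammer q n ≤ ∏ j ∈ range n, (1 - α ^ (j + 1))⁻¹ := by
        refine prod_le_prod (fun j _ => ?_) fun j _ => ?_
        · have := (abs_le.1 (abs_pow_le_pow_of_abs_le hq (j + 1))).2
          linarith [pow_le_one₀ (n := j + 1) hα₀ hα₁.le]
        · have hqk := (abs_le.1 (abs_pow_le_pow_of_abs_le hq (j + 1))).1
          have ha : α ^ (j + 1) < 1 := pow_lt_one₀ hα₀ hα₁ j.succ_ne_zero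
          calc 1 - q ^ (j + 1) ≤ 1 + α ^ (j + 1) := by linarith
            _ ≤ (1 - α ^ (j + 1))⁻¹ := by
              rw [← one_div, le_div_iff₀ (by linarith)]
              nlinarith [pow_nonneg hα₀ (j + 1)]
    _ = (qPochhammer α n)⁻¹ := prod_inv_distrib _
    _ ≤ (1 - α / (1 - α))⁻¹ :=
        inv_anti₀ hβ (one_sub_le_qPochhammer (abs_of_nonneg hα₀).le hα₁ n)

theorem qBinom_mem_Icc (hq : |q| ≤ α) (hα : α < 1 / 2) {m n : ℕ} (hmn : m ≤ n) :
    qBinom q n m ∈ Set.Icc ((1 - α / (1 - α)) ^ 3) ((1 - α / (1 - α)) ^ 3)⁻¹ := by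
  have hα₁ : α < 1 := by linarith
  have hβ := one_sub_div_one_sub_pos hα
  set β := 1 - α / (1 - α)
  have hq₁ : q ≠ 1 := fun h => by rw [h, abs_one] at hq; linarith
  have lower k : β ≤ qPochhammer q k := one_sub_le_qPochhammer hq hα₁ k
  have upper k : qPochhammer q k ≤ β⁻¹ := qPochhammer_le_inv hq hα k
  rw [qBinom_eq_qPochhammer hq₁ hmn]
  constructor
  · calc β ^ 3 = β / (β⁻¹ * β⁻¹) := by field_simp
      _ ≤ _ := div_le_div₀ (hβ.le.trans (lower n)) (lower n)
          (mul_pos (hβ.trans_le (lower m)) (hβ.trans_le (lower _)))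
          (mul_le_mul (upper m) (upper _) (hβ.le.trans (lower _)) (inv_pos.2 hβ).le)
  · calc _ ≤ β⁻¹ / (β * β) := div_le_div₀ (inv_pos.2 hβ).le (upper n) (mul_pos hβ hβ)
          (mul_le_mul (lower m) (lower _) hβ.le (hβ.le.trans (lower m)))
      _ = (β ^ 3)⁻¹ := by field_simp

theorem abs_sum_range_pow_mul_le (hq : |q| ≤ α) (hα : α < 1) {r : ℕ} {e : ℕ → ℕ}
    (he : ∀ i < r, r - i ≤ e i) {x : ℕ → ℝ} {M : ℝ} (hM : 0 ≤ M) (hx : ∀ i < r, |x i| ≤ M) :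
    |∑ i ∈ range r, q ^ e i * x i| ≤ α / (1 - α) * M := by
  have hα₀ : 0 ≤ α := (abs_nonneg q).trans hq
  calc |∑ i ∈ range r, q ^ e i * x i| ≤ ∑ i ∈ range r, α ^ (r - 1 - i + 1) * M := by
        refine (abs_sum_le_sum_abs _ _).trans (sum_le_sum fun i hi => ?_)
        have hi := mem_range.1 hi
        rw [abs_mul, show r - 1 - i + 1 = r - i by omega]
        refine mul_le_mul ((abs_pow_le_pow_of_abs_le hq _).trans ?_) (hx i hi) (abs_nonneg _)
          (pow_nonneg hα₀ _)
        exact pow_le_pow_of_le_one hα₀ hα.le (he i hi)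
    _ = (∑ j ∈ range r, α ^ (j + 1)) * M := by
        rw [← sum_mul, sum_range_reflect (fun j => α ^ (j + 1))]
    _ ≤ α / (1 - α) * M := mul_le_mul_of_nonneg_right (sum_range_pow_succ_le hα₀ hα r) hM

theorem abs_qBinom_le (hq : |q| ≤ α) (hα : α < 1 / 2) (n m : ℕ) :
    |qBinom q n m| ≤ ((1 - α / (1 - α)) ^ 3)⁻¹ := by
  have hβ := one_sub_div_one_sub_pos hα
  by_cases hmn : m ≤ n
  · obtain ⟨hlow, hupp⟩ := qBinom_mem_Icc hq hα hmn
    rwa [abs_of_pos ((pow_pos hβ 3).trans_le hlow)]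
  · rw [qBinom, if_neg hmn, abs_zero]
    positivity

noncomputable def diagonalSum (q : ℝ) (k r s : ℕ) : ℝ :=
  ∑ i ∈ range (r + 1), q ^ ((r - i) ^ 2 + 2 * k * (r - i)) *
    qFact q r * qFact q s * qBinom q r i * qBinom q s (r - i)

theorem abs_diagonalSum_sub_le (hq : |q| ≤ α) (hα : α < 1 / 2) (k r s : ℕ) :
    |diagonalSum q k r s - qFact q r * qFact q s| ≤
      α / (1 - α) * (((1 - α / (1 - α)) ^ 3)⁻¹ ^ 2 * (qFact q r * qFact q s)) := by
  have hq₁ : |q| < 1 := by linarith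
  have hF : 0 < qFact q r * qFact q s := mul_pos (qFact_pos hq₁ r) (qFact_pos hq₁ s)
  rw [diagonalSum, sum_range_succ, Nat.sub_self, qBinom_self hq₁, qBinom_zero_right hq₁]
  simp only [mul_assoc, zero_pow two_ne_zero, mul_zero, add_zero, pow_zero, one_mul, mul_one,
    add_sub_cancel_right]
  refine abs_sum_range_pow_mul_le hq (by linarith)
    (fun i _ => (Nat.le_self_pow two_ne_zero _).trans (Nat.le_add_right _ _))
    (by positivity) fun i _ => ?_
  rw [abs_mul, abs_mul, abs_mul, abs_of_pos (qFact_pos hq₁ r), abs_of_pos (qFact_pos hq₁ s), sq]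
  calc qFact q r * (qFact q s * (|qBinom q r i| * |qBinom q s (r - i)|))
      ≤ qFact q r * (qFact q s * (((1 - α / (1 - α)) ^ 3)⁻¹ * ((1 - α / (1 - α)) ^ 3)⁻¹)) := by
        refine mul_le_mul_of_nonneg_left (mul_le_mul_of_nonneg_left ?_ (qFact_pos hq₁ s).le)
          (qFact_pos hq₁ r).le
        exact mul_le_mul (abs_qBinom_le hq hα _ _) (abs_qBinom_le hq hα _ _) (abs_nonneg _)
          (inv_pos.2 (pow_pos (one_sub_div_one_sub_pos hα) 3)).le
    _ = _ := by ring

end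

/-- Two-sided norm estimate for the diagonal sum
`‖ξ_{r,s}‖² = ∑_i q^{(r-i)² + 2k(r-i)} [r]_q! [s]_q! binom(r,i)_q binom(s,r-i)_q`. -/
theorem diagonal_sum_two_sided_bound :
    ∃ α : ℝ, 0 < α ∧ ∀ q : ℝ, |q| ≤ α → ∀ k r s : ℕ,
      (1 / 2) * qFact q (r + s) ≤
        (∑ i ∈ Finset.range (r + 1),
          q ^ ((r - i) ^ 2 + 2 * k * (r - i)) *
            qFact q r * qFact q s * qBinom q r i * qBinom q s (r - i)) ∧
      (∑ i ∈ Finset.range (r + 1),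
          q ^ ((r - i) ^ 2 + 2 * k * (r - i)) *
            qFact q r * qFact q s * qBinom q r i * qBinom q s (r - i)) ≤
        2 * qFact q (r + s) := by
  refine ⟨1 / 20, by norm_num, fun q hq k r s => ?_⟩
  have hq₁ : |q| < 1 := by linarith
  have hF : 0 < qFact q r * qFact q s := mul_pos (qFact_pos hq₁ r) (qFact_pos hq₁ s)
  have hS := abs_le.1 (abs_diagonalSum_sub_le hq (by norm_num) k r s)
  obtain ⟨hG₁, hG₂⟩ := qBinom_mem_Icc hq (by norm_num) (Nat.le_add_right r s)
  change _ ≤ diagonalSum q k r s ∧ diagonalSum q k r s ≤ _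
  rw [qFact_add_eq_qBinom_mul hq₁]
  norm_num at hS hG₁ hG₂
  constructor
  · linarith [mul_le_mul_of_nonneg_right hG₂ hF.le]
  · linarith [mul_le_mul_of_nonneg_right hG₁ hF.le]
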